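/- Let n ≥ 2, let R be a ring Lie nilpotent of index n, and set q = 2^(n-2) (for n = 2 take q = 1). If a, b ∈ R satisfy ab = 0, then (bRbRa)R(bRbRa)R⋯R(bRbRa) = {0}, where the factor bRbRa appears q times; i.e., bx₁by₁az₁ ⋯ z_{q-1} bx_q by_q a = 0 for all x_i, y_i, z_i ∈ R. -/

import Mathlib

/-- Left-normed commutator: `lnc x [x₂,…,x_k] = [x, x₂, …, x_k]*`. -/
def lnc {R : Type*} [Ring R] (x : R) (l : List R) : R :=
  l.foldl (fun a y => a * y - y * a) x

section basic
variable {R : Type*} [Ring R]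

theorem lnc_append (x : R) (l m : List R) : lnc x (l ++ m) = lnc (lnc x l) m :=
  List.foldl_append

theorem lnc_concat (x y : R) (l : List R) :
    lnc x (l ++ [y]) = lnc x l * y - y * lnc x l := by
  rw [lnc_append]; rfl

theorem lnc_zero (l : List R) : lnc (0 : R) l = 0 := by
  induction l with
  | nil => rfl
  | cons y l ih =>
    show lnc (0 * y - y * 0) l = 0
    rw [zero_mul, mul_zero, sub_zero]; exact ih

theorem lnc_hom {S : Type*} [Ring S] (f : R →+* S) (x : R) (l : List R) :
    f (lnc x l) = lnc (f x) (l.map f) := by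
  induction l generalizing x with
  | nil => rfl
  | cons y l ih =>
    show f (lnc (x * y - y * x) l) = lnc (f x * f y - f y * f x) (l.map f)
    rw [ih]; congr 1; simp

end basic

section base
variable {R : Type*} [Ring R]

theorem base_main (cen : ∀ u v w : R, (u * v - v * u) * w = w * (u * v - v * u))
    (a b : R) (hab : a * b = 0) (x y : R) : b * x * b * y * a = 0 := by
  have hba : ∀ w : R, b * a * w = w * (b * a) := by
    intro w
    have h := cen b a w
    rw [hab, sub_zero] at h
    exact h
  have hbab : b * a * b = 0 := by rw [mul_assoc, hab, mul_zero]
  have hb2a : b * (b * a) = 0 := by rw [← hba b]; exact hbab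
  -- h1 : b * ((w*b - b*w) * a) = 0
  have h1 : ∀ w : R, b * ((w * b - b * w) * a) = 0 := by
    intro w
    rw [cen w b a, ← mul_assoc, hba, sub_mul]
    have e1 : w * b * (b * a) = 0 := by rw [mul_assoc, hb2a, mul_zero]
    have e2 : b * w * (b * a) = 0 := by
      rw [mul_assoc, ← hba w, ← mul_assoc, hb2a, zero_mul]
    rw [e1, e2, sub_zero]
  -- hd : b * (w * a) = b*a*w + (w*a - a*w)*b
  have hd : ∀ w : R, b * (w * a) = b * a * w + (w * a - a * w) * b := by
    intro w
    rw [cen w a b]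
    noncomm_ring
  -- h2 : b*(b*(w*a)) = 0
  have h2 : ∀ w : R, b * (b * (w * a)) = 0 := by
    intro w
    rw [hd w, mul_add]
    have e1 : b * (b * a * w) = 0 := by rw [← mul_assoc, hb2a, zero_mul]
    have hwab : (w * a - a * w) * b = -((w * b - b * w) * a) := by
      have h5 : a * (w * b) = (w * b - b * w) * a := by
        rw [cen w b a, mul_sub, ← mul_assoc a b w, hab, zero_mul, sub_zero]
      calc (w * a - a * w) * b = w * (a * b) - a * (w * b) := by noncomm_ring
        _ = -((w * b - b * w) * a) := by rw [hab, mul_zero, h5, zero_sub]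
    have e2 : b * ((w * a - a * w) * b) = 0 := by
      rw [hwab, mul_neg, h1 w, neg_zero]
    rw [e1, e2, add_zero]
  -- alternating identity
  have alt : ∀ p q r s : R,
      (p * q - q * p) * (r * s - s * r) + (p * s - s * p) * (r * q - q * r) = 0 := by
    intro p q r s
    have hk : (p * q - q * p) * (r * s - s * r) + (p * s - s * p) * (r * q - q * r)
        = ((p * r * q - q * (p * r)) * s - s * (p * r * q - q * (p * r)))
          - p * ((r * q - q * r) * s - s * (r * q - q * r))
          - ((p * q - q * p) * s - s * (p * q - q * p)) * r := by noncomm_ring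
    rw [hk, cen (p*r) q s, cen r q s, cen p q s]
    simp
  -- main computation
  have split1 : b * x * b * y * a = x * (b * (b * (y * a))) + (b * x - x * b) * (b * (y * a)) := by
    noncomm_ring
  rw [split1, h2 y, mul_zero, zero_add, hd y, mul_add]
  have t1 : (b * x - x * b) * (b * a * y) = 0 := by
    rw [← mul_assoc]
    have hz : (b * x - x * b) * (b * a) = 0 := by
      rw [← hba, mul_sub]
      have u1 : b * a * (b * x) = 0 := by rw [← mul_assoc, hbab, zero_mul]
      have u2 : b * a * (x * b) = 0 := by rw [hba (x * b), mul_assoc, hb2a, mul_zero]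
      rw [u1, u2, sub_zero]
    rw [hz, zero_mul]
  have t2 : (b * x - x * b) * ((y * a - a * y) * b) = 0 := by
    rw [← mul_assoc]
    have halt : (b * x - x * b) * (y * a - a * y) = -((b * a - a * b) * (y * x - x * y)) :=
      eq_neg_of_add_eq_zero_left (alt b x y a)
    rw [halt, hab, sub_zero, neg_mul, hba (y * x - x * y), mul_assoc, hbab, mul_zero, neg_zero]
  rw [t1, t2, add_zero]

end base


def idealCon {R : Type*} [Ring R] (T : AddSubgroup R)
    (hl : ∀ A ∈ T, ∀ s : R, s * A ∈ T) (hr : ∀ A ∈ T, ∀ s : R, A * s ∈ T) : RingCon R where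
  r p q := p - q ∈ T
  iseqv := {
    refl := fun p => by simpa using T.zero_mem
    symm := fun {p q} h => by simpa [neg_sub] using T.neg_mem h
    trans := fun {p q s} h1 h2 => by simpa [sub_add_sub_cancel] using T.add_mem h1 h2 }
  mul' := fun {a b c d} h1 h2 => by
    show a * c - b * d ∈ T
    have h : a * c - b * d = a * (c - d) + (a - b) * d := by noncomm_ring
    rw [h]; exact T.add_mem (hl _ h2 a) (hr _ h1 d)
  add' := fun {a b c d} h1 h2 => by
    show a + c - (b + d) ∈ T
    have h : a + c - (b + d) = (a - b) + (c - d) := by abel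
    rw [h]; exact T.add_mem h1 h2

section step
variable {R : Type*} [Ring R] (n : ℕ)

/-- span of long left-normed commutators -/
def Sgrp (k : ℕ) : AddSubgroup R :=
  AddSubgroup.closure {t | ∃ z l, k ≤ l.length + 1 ∧ t = lnc z l}

variable (hn : 2 ≤ n) (hL : ∀ (x : R) (l : List R), l.length = n + 1 → lnc x l = 0)

section withL
include hL

theorem lnc_long (x : R) (l : List R) (h : n + 1 ≤ l.length) : lnc x l = 0 := by
  have hsplit := List.take_append_drop (n + 1) l
  rw [← hsplit, lnc_append]
  have ht : (l.take (n + 1)).length = n + 1 := by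
    rw [List.length_take]; omega
  rw [hL _ _ ht, lnc_zero]

theorem lnc_cen (t r : R) (h : ∃ x l, l.length = n ∧ t = lnc x l) : t * r = r * t := by
  obtain ⟨x, l, hlen, rfl⟩ := h
  have h := hL x (l ++ [r]) (by simp [hlen])
  rw [lnc_concat] at h
  exact sub_eq_zero.mp h

theorem Sgrp_zero (k : ℕ) (hk : n + 2 ≤ k) (t : R) (ht : t ∈ Sgrp (R := R) k) : t = 0 := by
  refine AddSubgroup.closure_induction ?_ rfl ?_ ?_ ht
  · rintro s ⟨z, l, hlen, rfl⟩
    exact lnc_long n hL z l (by omega)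
  · rintro s u _ _ hs hu; rw [hs, hu, add_zero]
  · rintro s _ hs; rw [hs, neg_zero]

end withL

theorem Sgrp_br (k : ℕ) (w : R) (hw : w ∈ Sgrp (R := R) k) (t : R) :
    w * t - t * w ∈ Sgrp (R := R) (k + 1) := by
  induction hw using AddSubgroup.closure_induction with
  | mem s hs =>
    obtain ⟨z, l, hlen, rfl⟩ := hs
    rw [← lnc_concat]
    exact AddSubgroup.subset_closure ⟨z, l ++ [t], by simp; omega, rfl⟩
  | zero => simpa using (Sgrp (R := R) (k + 1)).zero_mem
  | add p q hp hq ihp ihq =>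
    have h : (p + q) * t - t * (p + q) = (p * t - t * p) + (q * t - t * q) := by noncomm_ring
    rw [h]; exact add_mem ihp ihq
  | neg p hp ihp =>
    have h : (-p) * t - t * (-p) = -(p * t - t * p) := by noncomm_ring
    rw [h]; exact neg_mem ihp

theorem lnc_bracket (m : List R) (u : R) (l : List R) (v : R) :
    lnc u l * lnc v m - lnc v m * lnc u l ∈ Sgrp (R := R) (l.length + m.length + 2) := by
  induction m using List.reverseRecOn generalizing u l v with
  | nil =>
    rw [show lnc v ([] : List R) = v from rfl, ← lnc_concat]
    exact AddSubgroup.subset_closure ⟨u, l ++ [v], by simp, rfl⟩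
  | append_singleton m t ihm =>
    rw [lnc_concat]
    set U := lnc u l with hU
    set V0 := lnc v m with hV0
    have jac : U * (V0 * t - t * V0) - (V0 * t - t * V0) * U
        = ((U * V0 - V0 * U) * t - t * (U * V0 - V0 * U))
          - ((U * t - t * U) * V0 - V0 * (U * t - t * U)) := by noncomm_ring
    rw [jac]
    refine sub_mem ?_ ?_
    · have h1 := Sgrp_br (l.length + m.length + 2) _ (ihm u l v) t
      have harith : l.length + m.length + 2 + 1 = l.length + (m ++ [t]).length + 2 := by
        simp; omega
      exact harith ▸ h1
    · have h2 := ihm u (l ++ [t]) v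
      rw [lnc_concat] at h2
      have harith : (l ++ [t]).length + m.length + 2 = l.length + (m ++ [t]).length + 2 := by
        simp; omega
      exact harith ▸ h2

end step

section step2
variable {R : Type*} [Ring R] (n : ℕ)
variable (hn : 2 ≤ n) (hL : ∀ (x : R) (l : List R), l.length = n + 1 → lnc x l = 0)

include hn hL

theorem gens_mul_zero (g g' : R)
    (hg : ∃ x l, l.length = n ∧ g = lnc x l) (hg' : ∃ x l, l.length = n ∧ g' = lnc x l) :
    g * g' = 0 := by
  obtain ⟨x1, l1, hl1, rfl⟩ := hg
  obtain ⟨x2, l2, hl2, rfl⟩ := hg'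
  obtain ⟨l0, w, rfl⟩ : ∃ l0 w, l1 = l0 ++ [w] := by
    rcases List.eq_nil_or_concat l1 with h | ⟨L, bb, h⟩
    · exfalso; rw [h] at hl1; simp at hl1; omega
    · exact ⟨L, bb, by simpa using h⟩
  obtain ⟨m0, t, rfl⟩ : ∃ m0 t, l2 = m0 ++ [t] := by
    rcases List.eq_nil_or_concat l2 with h | ⟨L, bb, h⟩
    · exfalso; rw [h] at hl2; simp at hl2; omega
    · exact ⟨L, bb, by simpa using h⟩
  have hlen0 : l0.length + 1 = n := by simpa using hl1
  have hlenm : m0.length + 1 = n := by simpa using hl2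
  set c0 := lnc x1 l0 with hc0
  set d0 := lnc x2 m0 with hd0
  have hcd : c0 * d0 = d0 * c0 := by
    have h := lnc_bracket (R := R) m0 x1 l0 x2
    have h0 := Sgrp_zero n hL (l0.length + m0.length + 2) (by omega) _ h
    exact sub_eq_zero.mp h0
  have hCd0 : (lnc x1 (l0 ++ [w])) * d0 = lnc x1 (l0 ++ [w * d0]) := by
    rw [lnc_concat, lnc_concat, ← hc0]
    calc (c0 * w - w * c0) * d0 = c0 * (w * d0) - w * (c0 * d0) := by noncomm_ring
      _ = c0 * (w * d0) - w * (d0 * c0) := by rw [hcd]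
      _ = c0 * (w * d0) - w * d0 * c0 := by noncomm_ring
  set C := lnc x1 (l0 ++ [w]) with hC
  have hCcen : ∀ r : R, C * r = r * C := fun r =>
    lnc_cen n hL _ r ⟨x1, l0 ++ [w], by simpa using hlen0, rfl⟩
  have hCd0cen : ∀ r : R, (C * d0) * r = r * (C * d0) := by
    intro r
    rw [hCd0]
    exact lnc_cen n hL _ r ⟨x1, l0 ++ [w * d0], by simpa using hlen0, rfl⟩
  calc C * lnc x2 (m0 ++ [t]) = C * (d0 * t - t * d0) := by rw [lnc_concat, ← hd0]
    _ = (C * d0) * t - C * (t * d0) := by noncomm_ring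
    _ = (C * d0) * t - (C * t) * d0 := by rw [← mul_assoc C t d0]
    _ = (C * d0) * t - (t * C) * d0 := by rw [hCcen t]
    _ = (C * d0) * t - t * (C * d0) := by rw [mul_assoc t C d0]
    _ = t * (C * d0) - t * (C * d0) := by rw [hCd0cen t]
    _ = 0 := sub_self _

end step2

section step3
variable {R : Type*} [Ring R] (n : ℕ)

/-- left multiples of central weight-(n+1) commutators -/
def Tgrp : AddSubgroup R :=
  AddSubgroup.closure {t | ∃ r g : R, (∃ x l, l.length = n ∧ g = lnc x l) ∧ t = r * g}

variable (hn : 2 ≤ n) (hL : ∀ (x : R) (l : List R), l.length = n + 1 → lnc x l = 0)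

theorem Tgrp_gen (g : R) (hg : ∃ x l, l.length = n ∧ g = lnc x l) : g ∈ Tgrp (R := R) n :=
  AddSubgroup.subset_closure ⟨1, g, hg, (one_mul g).symm⟩

include hL in
theorem Tgrp_mulr (A : R) (hA : A ∈ Tgrp (R := R) n) (s : R) : A * s ∈ Tgrp (R := R) n := by
  induction hA using AddSubgroup.closure_induction with
  | mem tt htt =>
    obtain ⟨r, g, hg, rfl⟩ := htt
    refine AddSubgroup.subset_closure ⟨r * s, g, hg, ?_⟩
    rw [mul_assoc, lnc_cen n hL g s hg, ← mul_assoc]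
  | zero => rw [zero_mul]; exact zero_mem _
  | add p q hp hq ihp ihq => rw [add_mul]; exact add_mem ihp ihq
  | neg p hp ihp => rw [neg_mul]; exact neg_mem ihp

theorem Tgrp_mull (A : R) (hA : A ∈ Tgrp (R := R) n) (s : R) : s * A ∈ Tgrp (R := R) n := by
  induction hA using AddSubgroup.closure_induction with
  | mem tt htt =>
    obtain ⟨r, g, hg, rfl⟩ := htt
    exact AddSubgroup.subset_closure ⟨s * r, g, hg, by rw [mul_assoc]⟩
  | zero => rw [mul_zero]; exact zero_mem _
  | add p q hp hq ihp ihq => rw [mul_add]; exact add_mem ihp ihq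
  | neg p hp ihp => rw [mul_neg]; exact neg_mem ihp

include hn hL in
theorem Tgrp_gen_mul (r g : R) (hg : ∃ x l, l.length = n ∧ g = lnc x l)
    (B : R) (hB : B ∈ Tgrp (R := R) n) : (r * g) * B = 0 := by
  induction hB using AddSubgroup.closure_induction with
  | mem uu huu =>
    obtain ⟨r', g', hg', rfl⟩ := huu
    calc (r * g) * (r' * g') = r * ((g * r') * g') := by rw [mul_assoc, ← mul_assoc g r' g']
      _ = r * ((r' * g) * g') := by rw [lnc_cen n hL g r' hg]
      _ = r * (r' * (g * g')) := by rw [mul_assoc r' g g']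
      _ = 0 := by rw [gens_mul_zero n hn hL g g' hg hg', mul_zero, mul_zero]
  | zero => exact mul_zero _
  | add p q hp hq ihp ihq => rw [mul_add, ihp, ihq, add_zero]
  | neg p hp ihp => rw [mul_neg, ihp, neg_zero]

include hn hL in
theorem Tgrp_mul_zero (A : R) (hA : A ∈ Tgrp (R := R) n) (B : R) (hB : B ∈ Tgrp (R := R) n) :
    A * B = 0 := by
  induction hA using AddSubgroup.closure_induction with
  | mem tt htt =>
    obtain ⟨r, g, hg, rfl⟩ := htt
    exact Tgrp_gen_mul n hn hL r g hg B hB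
  | zero => rw [zero_mul]
  | add p q hp hq ihp ihq => rw [add_mul, ihp, ihq, add_zero]
  | neg p hp ihp => rw [neg_mul, ihp, neg_zero]

end step3

universe u

theorem key : ∀ n : ℕ, 2 ≤ n → ∀ (R : Type u) [Ring R],
    (∀ (x : R) (l : List R), l.length = n → lnc x l = 0) →
    ∀ a b : R, a * b = 0 → ∀ x y z : ℕ → R,
    ((List.range (2 ^ (n - 2))).map (fun i => b * x i * b * y i * a * z i)).prod = 0 := by
  intro n hn
  induction n, hn using Nat.le_induction with
  | base =>
    intro R _ hL a b hab x y z
    have cen : ∀ u v w : R, (u * v - v * u) * w = w * (u * v - v * u) := by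
      intro u v w
      have h : (u * v - v * u) * w - w * (u * v - v * u) = 0 := hL u [v, w] rfl
      exact sub_eq_zero.mp h
    have hmain := base_main cen a b hab (x 0) (y 0)
    have hr : List.range 1 = [0] := rfl
    simp only [show (2:ℕ) ^ (2 - 2) = 1 from rfl, hr, List.map_cons, List.map_nil,
      List.prod_cons, List.prod_nil, mul_one]
    rw [hmain, zero_mul]
  | succ n hn IH =>
    intro R _ hL a b hab x y z
    -- hL is the L_{n+1} hypothesis:  l.length = n + 1 → lnc x l = 0
    set T := Tgrp (R := R) n with hT
    let con : RingCon R := idealCon T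
      (fun A hA s => Tgrp_mull n A hA s) (fun A hA s => Tgrp_mulr n hL A hA s)
    have hsurj : Function.Surjective con.mk' := fun q => Quotient.inductionOn' q fun r => ⟨r, rfl⟩
    have hπ0 : ∀ t : R, t ∈ T → con.mk' t = 0 := by
      intro t ht
      exact (RingCon.eq _).mpr (show t - 0 ∈ T by simpa using ht)
    have hπmem : ∀ t : R, con.mk' t = 0 → t ∈ T := by
      intro t h
      have h2 := (RingCon.eq _).mp (show ((t : R) : con.Quotient) = ((0 : R) : con.Quotient) from h)
      have h3 : t - 0 ∈ T := h2
      simpa using h3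
    -- the quotient satisfies L_n
    have hLQ : ∀ (X : con.Quotient) (L : List con.Quotient), L.length = n → lnc X L = 0 := by
      intro X L hlen
      obtain ⟨x0, rfl⟩ := hsurj X
      obtain ⟨l, rfl⟩ : ∃ l : List R, l.map con.mk' = L :=
        ⟨L.map (Function.surjInv hsurj), by
          rw [List.map_map]
          exact (List.map_congr_left (fun q _ => Function.surjInv_eq hsurj q)).trans (List.map_id L)⟩
      rw [← lnc_hom]
      exact hπ0 _ (Tgrp_gen n _ ⟨x0, l, by simpa using hlen, rfl⟩)
    -- apply the inductive hypothesis twice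
    have hq2 : (2:ℕ) ^ (n + 1 - 2) = 2 ^ (n - 2) + 2 ^ (n - 2) := by
      rw [show n + 1 - 2 = (n - 2) + 1 by omega, pow_succ, mul_two]
    have hhalf : ∀ x' y' z' : ℕ → R,
        ((List.range (2 ^ (n - 2))).map (fun i => b * x' i * b * y' i * a * z' i)).prod ∈ T := by
      intro x' y' z'
      apply hπmem
      rw [map_list_prod, List.map_map]
      have hfun : (con.mk' ∘ fun i => b * x' i * b * y' i * a * z' i)
          = fun i => con.mk' b * con.mk' (x' i) * con.mk' b * con.mk' (y' i) * con.mk' a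
            * con.mk' (z' i) := by
        funext i; simp [map_mul]
      rw [hfun]
      have habQ : con.mk' a * con.mk' b = 0 := by rw [← map_mul, hab, map_zero]
      exact IH con.Quotient hLQ (con.mk' a) (con.mk' b) habQ
        (fun i => con.mk' (x' i)) (fun i => con.mk' (y' i)) (fun i => con.mk' (z' i))
    -- split the product
    rw [hq2, List.range_add, List.map_append, List.prod_append, List.map_map]
    exact Tgrp_mul_zero n hn hL _ (hhalf x y z) _
      (hhalf (fun i => x (2 ^ (n - 2) + i)) (fun i => y (2 ^ (n - 2) + i))
        (fun i => z (2 ^ (n - 2) + i)))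

theorem bRbRa_power_zero {R : Type*} [Ring R] (n : ℕ) (hn : 2 ≤ n)
    (hLn : ∀ (x : R) (l : List R), l.length = n → lnc x l = 0)
    (a b : R) (hab : a * b = 0) (x y z : ℕ → R) (hz : z (2 ^ (n - 2) - 1) = 1) :
    ((List.range (2 ^ (n - 2))).map (fun i => b * x i * b * y i * a * z i)).prod = 0 :=
  key n hn R hLn a b hab x y z
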